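/- arXiv:2502.07569 — 2 statements merged into one kernel-verified Lean document; each statement's English description precedes it below -/
import Mathlib

section
/- Let N ∈ ℕ, let M be a Hermitian positive definite N×N complex matrix, let H be a Hermitian N×N complex matrix, set A = M⁻¹·H, and let t ∈ ℝ. Then exp(−i·t·A)* · M · exp(−i·t·A) = M; in particular, for every U ∈ ℂᴺ the M-weighted norm is conserved: (exp(−i·t·A)·U)* · M · (exp(−i·t·A)·U) = U* · M · U. -/
/-!
For `c` purely imaginary, `X = c • M⁻¹H` is skew-adjoint for the `M`-inner product:
`Xᴴ M = -M X`. Hence `(exp X)ᴴ = exp Xᴴ = M exp(-X) M⁻¹ = M (exp X)⁻¹ M⁻¹`, which gives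
`(exp X)ᴴ M exp X = M`; the conservation of `Uᴴ M U` is the same identity read on vectors.
-/

open Matrix
open scoped ComplexOrder

namespace Matrix

open NormedSpace

variable {n 𝔸 : Type*} [Fintype n]

theorem star_mulVec_dotProduct_mulVec_mulVec [CommRing 𝔸] [StarRing 𝔸]
    (B M : Matrix n n 𝔸) (U : n → 𝔸) :
    star (B *ᵥ U) ⬝ᵥ M *ᵥ (B *ᵥ U) = star U ⬝ᵥ (Bᴴ * M * B) *ᵥ U := by
  rw [star_mulVec, mulVec_mulVec, dotProduct_mulVec, vecMul_vecMul, ← Matrix.mul_assoc,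
    ← dotProduct_mulVec]

theorem conjTranspose_smul_inv_mul_mul [DecidableEq n] [CommRing 𝔸] [StarRing 𝔸]
    {M H : Matrix n n 𝔸} (hM : IsUnit M) (hMH : M.IsHermitian) (hH : H.IsHermitian) {c : 𝔸} (hc : star c = -c) :
    (c • (M⁻¹ * H))ᴴ * M = -(M * (c • (M⁻¹ * H))) := by
  have hdet : IsUnit M.det := (isUnit_iff_isUnit_det M).mp hM
  rw [conjTranspose_smul, conjTranspose_mul, conjTranspose_nonsing_inv, hMH.eq, hH.eq, hc,
    smul_mul, Matrix.mul_assoc, nonsing_inv_mul _ hdet, Matrix.mul_one, Matrix.mul_smul,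
    mul_nonsing_inv_cancel_left _ _ hdet, neg_smul]

theorem exp_conjTranspose_mul_mul_exp [DecidableEq n] [NormedCommRing 𝔸] [NormedAlgebra ℚ 𝔸]
    [CompleteSpace 𝔸] [StarRing 𝔸] [ContinuousStar 𝔸] {M X : Matrix n n 𝔸} (hM : IsUnit M)
    (hX : Xᴴ * M = -(M * X)) : (exp X)ᴴ * M * exp X = M := by
  have hdet : IsUnit M.det := (isUnit_iff_isUnit_det M).mp hM
  have hconj : Xᴴ = M * -X * M⁻¹ := by
    rw [Matrix.mul_neg, ← hX, mul_nonsing_inv_cancel_right _ _ hdet]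
  rw [← exp_conjTranspose, hconj, exp_conj _ _ hM, exp_neg, Matrix.mul_assoc _ M⁻¹,
    nonsing_inv_mul _ hdet, Matrix.mul_one, Matrix.mul_assoc,
    nonsing_inv_mul _ ((isUnit_iff_isUnit_det _).mp (isUnit_exp X)), Matrix.mul_one]

end Matrix

/-- Mass conservation of the linear substep of the time-splitting scheme SI:
for a Hermitian positive definite mass matrix `M` and a Hermitian matrix `H`,
the propagator `exp(−i·t·M⁻¹H)` is unitary with respect to the `M`-inner
product: `exp(−i·t·A)* · M · exp(−i·t·A) = M` where `A = M⁻¹H`, and hence the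
`M`-weighted norm of every coefficient vector is conserved. -/
theorem ts_scheme_SI_mass_conservation
    (N : ℕ) (M H : Matrix (Fin N) (Fin N) ℂ)
    (hM : M.PosDef) (hH : H.IsHermitian) (t : ℝ)
    (A : Matrix (Fin N) (Fin N) ℂ) (hA : A = M⁻¹ * H) :
    (NormedSpace.exp ((-(Complex.I * (t : ℂ))) • A))ᴴ * M *
        NormedSpace.exp ((-(Complex.I * (t : ℂ))) • A) = M ∧
    ∀ U : Fin N → ℂ,
      star ((NormedSpace.exp ((-(Complex.I * (t : ℂ))) • A)).mulVec U) ⬝ᵥ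
          M.mulVec ((NormedSpace.exp ((-(Complex.I * (t : ℂ))) • A)).mulVec U) =
        star U ⬝ᵥ M.mulVec U := by
  have hc : star (-(Complex.I * (t : ℂ))) = -(-(Complex.I * (t : ℂ))) := by simp
  have hunitary := exp_conjTranspose_mul_mul_exp hM.isUnit
    (hA ▸ conjTranspose_smul_inv_mul_mul hM.isUnit hM.isHermitian hH hc)
  exact ⟨hunitary, fun U => by rw [star_mulVec_dotProduct_mulVec_mulVec, hunitary]⟩
end

section
/- For every r > 0 there exists a constant C > 0 such that: for every unital complex Banach algebra A, all a, b ∈ A with ‖a‖ ≤ r and ‖b‖ ≤ r, and all t ∈ [0, 1], one has ‖exp(t·(a + b)) − exp((t/2)·b) · exp(t·a) · exp((t/2)·b)‖ ≤ C·t³. -/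
/-!
Compare everything with the second-order Taylor polynomial `q x = 1 + x + x ^ 2 / 2` of `exp`.
The tail of the exponential series gives `‖exp x - q x‖ ≤ ‖x‖ ^ 3 * e ^ ‖x‖`, so replacing each
exponential by `q` costs `O(δ ^ 3)` when all exponents have norm at most `δ` (telescope the
product). In `q u * q v * q u` the terms of degree at most two are exactly those of
`q (u + v + u)`: the symmetric arrangement is what cancels the second-order commutator that a
Lie splitting `q u * q v` would leave. The remaining terms have degree at least three. Taking
`u = (t / 2) • b`, `v = t • a` and `δ = r * t` gives the `t ^ 3` bound.
-/

open Finset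
open scoped Nat

variable {𝔸 : Type*} [NormedRing 𝔸]

theorem norm_mul_mul_sub_mul_mul_le {x₁ x₂ x₃ y₁ y₂ y₃ : 𝔸} {M ε : ℝ}
    (hx₂ : ‖x₂‖ ≤ M) (hx₃ : ‖x₃‖ ≤ M) (hy₁ : ‖y₁‖ ≤ M) (hy₂ : ‖y₂‖ ≤ M)
    (h₁ : ‖x₁ - y₁‖ ≤ ε) (h₂ : ‖x₂ - y₂‖ ≤ ε) (h₃ : ‖x₃ - y₃‖ ≤ ε) :
    ‖x₁ * x₂ * x₃ - y₁ * y₂ * y₃‖ ≤ 3 * M ^ 2 * ε := by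
  have telescope : x₁ * x₂ * x₃ - y₁ * y₂ * y₃
      = (x₁ - y₁) * x₂ * x₃ + y₁ * (x₂ - y₂) * x₃ + y₁ * y₂ * (x₃ - y₃) := by noncomm_ring
  rw [telescope]
  refine (norm_add₃_le ..).trans ?_
  linarith [norm_mul_le_of_le (norm_mul_le_of_le h₁ hx₂) hx₃,
    norm_mul_le_of_le (norm_mul_le_of_le hy₁ h₂) hx₃,
    norm_mul_le_of_le (norm_mul_le_of_le hy₁ hy₂) h₃]

namespace NormedSpace

section Taylor

variable {𝕂 : Type*} [RCLike 𝕂] [NormedAlgebra 𝕂 𝔸]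

variable (𝕂) in
def expTaylor2 (x : 𝔸) : 𝔸 := 1 + x + (2⁻¹ : 𝕂) • x ^ 2

theorem norm_half_smul_sq_le {x : 𝔸} {δ : ℝ} (hx : ‖x‖ ≤ δ) :
    ‖(2⁻¹ : 𝕂) • x ^ 2‖ ≤ δ ^ 2 / 2 := by
  rw [norm_smul, norm_inv, RCLike.norm_ofNat, sq, sq, inv_mul_eq_div]
  gcongr
  exact norm_mul_le_of_le hx hx

theorem norm_expTaylor2_mul_mul_sub_le {u v : 𝔸} {δ : ℝ} (hu : ‖u‖ ≤ δ) (hv : ‖v‖ ≤ δ) :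
    ‖expTaylor2 𝕂 u * expTaylor2 𝕂 v * expTaylor2 𝕂 u - expTaylor2 𝕂 (u + v + u)‖
      ≤ 7 * δ ^ 3 * (1 + δ) ^ 3 := by
  set h : 𝔸 → 𝔸 := fun x ↦ (2⁻¹ : 𝕂) • x ^ 2 with h_def
  have hδ : 0 ≤ δ := (norm_nonneg u).trans hu
  have hh : ∀ x : 𝔸, ‖x‖ ≤ δ → ‖h x‖ ≤ δ ^ 2 := fun x hx ↦
    (norm_half_smul_sq_le hx).trans (by linarith [sq_nonneg δ])
  have hp : ∀ x : 𝔸, ‖x‖ ≤ δ → ‖x + h x‖ ≤ δ * (1 + δ) := fun x hx ↦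
    (norm_add_le_of_le hx (hh x hx)).trans_eq (by ring)
  have hc : ∀ x y : 𝔸, ‖x‖ ≤ δ → ‖y‖ ≤ δ →
      ‖x * h y + h x * (y + h y)‖ ≤ 2 * δ ^ 3 * (1 + δ) ^ 3 := fun x y hx hy ↦
    (norm_add_le_of_le (norm_mul_le_of_le hx (hh y hy))
      (norm_mul_le_of_le (hh x hx) (hp y hy))).trans
      (by nlinarith [pow_nonneg hδ 3, pow_nonneg hδ 4, pow_nonneg hδ 5, pow_nonneg hδ 6])
  have hppp : ‖(u + h u) * (v + h v) * (u + h u)‖ ≤ δ ^ 3 * (1 + δ) ^ 3 :=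
    (norm_mul_le_of_le (norm_mul_le_of_le (hp u hu) (hp v hv)) (hp u hu)).trans_eq (by ring)
  -- With `expTaylor2 x = 1 + (x + h x)`, the terms of degree at most two cancel, because
  -- `(u + v + u) ^ 2 / 2 = u ^ 2 + u * v + v * u + v ^ 2 / 2`.
  have expand : expTaylor2 𝕂 u * expTaylor2 𝕂 v * expTaylor2 𝕂 u - expTaylor2 𝕂 (u + v + u)
      = (u + h u) * (v + h v) * (u + h u) + (u * h v + h u * (v + h v))
        + (v * h u + h v * (u + h u)) + (u * h u + h u * (u + h u)) := by
    simp only [h_def, expTaylor2, sq, mul_add, add_mul, mul_smul_comm, smul_mul_assoc, smul_smul,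
      smul_add, mul_one, one_mul, mul_assoc]
    module
  rw [expand]
  refine (norm_add₄_le ..).trans ?_
  linarith [hc u v hu hv, hc v u hv hu, hc u u hu hu]

variable [NormOneClass 𝔸]

theorem norm_expTaylor2_le {x : 𝔸} {δ : ℝ} (hx : ‖x‖ ≤ δ) :
    ‖expTaylor2 𝕂 x‖ ≤ Real.exp δ := by
  refine (norm_add_le_of_le (norm_add_le_of_le norm_one.le hx) (norm_half_smul_sq_le hx)).trans ?_
  simpa [add_comm] using Real.quadratic_le_exp_of_nonneg ((norm_nonneg x).trans hx)

variable [CompleteSpace 𝔸]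

variable (𝕂) in
theorem norm_exp_sub_sum_range_le (N : ℕ) (x : 𝔸) :
    ‖exp x - ∑ n ∈ range N, (n !⁻¹ : 𝕂) • x ^ n‖ ≤ ‖x‖ ^ N * Real.exp ‖x‖ := by
  have hexp : HasSum (fun n ↦ ‖x‖ ^ N * (‖x‖ ^ n / n !)) (‖x‖ ^ N * Real.exp ‖x‖) := by
    rw [Real.exp_eq_exp_ℝ]
    exact (expSeries_div_hasSum_exp ‖x‖).mul_left _
  rw [congrFun (exp_eq_tsum 𝕂) x, ← (expSeries_summable' (𝕂 := 𝕂) x).sum_add_tsum_nat_add N,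
    add_sub_cancel_left]
  refine tsum_of_norm_bounded hexp fun n ↦ ?_
  calc ‖((n + N)! ⁻¹ : 𝕂) • x ^ (n + N)‖ ≤ ‖x‖ ^ (n + N) / (n + N)! := by
        rw [norm_smul, norm_inv, RCLike.norm_natCast, div_eq_inv_mul]
        gcongr
        exact norm_pow_le x _
    _ ≤ ‖x‖ ^ N * (‖x‖ ^ n / n !) := by
        rw [pow_add, mul_comm, mul_div_assoc]
        gcongr
        exact Nat.le_add_right n N

theorem norm_exp_sub_expTaylor2_le {x : 𝔸} {δ : ℝ} (hx : ‖x‖ ≤ δ) :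
    ‖exp x - expTaylor2 𝕂 x‖ ≤ δ ^ 3 * Real.exp δ := by
  have taylor : ∑ n ∈ range 3, (n !⁻¹ : 𝕂) • x ^ n = expTaylor2 𝕂 x := by
    simp [expTaylor2, sum_range_succ]
  rw [← taylor]
  have hδ : 0 ≤ δ := (norm_nonneg x).trans hx
  exact (norm_exp_sub_sum_range_le 𝕂 3 x).trans
    (mul_le_mul (pow_le_pow_left₀ (norm_nonneg x) hx 3) (Real.exp_le_exp.2 hx)
      (Real.exp_pos _).le (pow_nonneg hδ 3))

end Taylor

theorem norm_exp_le_exp_norm (𝕂 : Type*) [RCLike 𝕂] [NormedAlgebra 𝕂 𝔸] [NormOneClass 𝔸]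
    [CompleteSpace 𝔸] (x : 𝔸) : ‖exp x‖ ≤ Real.exp ‖x‖ := by
  simpa using norm_exp_sub_sum_range_le 𝕂 0 x

theorem norm_exp_add_add_sub_exp_mul_exp_mul_exp_le (𝕂 : Type*) [RCLike 𝕂] [NormedAlgebra 𝕂 𝔸]
    [NormOneClass 𝔸] [CompleteSpace 𝔸] {u v : 𝔸} {δ : ℝ} (hu : ‖u‖ ≤ δ) (hv : ‖v‖ ≤ δ) :
    ‖exp (u + v + u) - exp u * exp v * exp u‖ ≤ 37 * δ ^ 3 * Real.exp (3 * δ) := by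
  have hδ : 0 ≤ δ := (norm_nonneg u).trans hu
  have hsum : ‖u + v + u‖ ≤ 3 * δ := by
    linarith [norm_add₃_le (a := u) (b := v) (c := u)]
  have hexp : ∀ x : 𝔸, ‖x‖ ≤ δ → ‖exp x‖ ≤ Real.exp δ := fun x hx ↦
    (norm_exp_le_exp_norm 𝕂 x).trans (Real.exp_le_exp.2 hx)
  have hexp3 : Real.exp (3 * δ) = Real.exp δ ^ 3 := by rw [← Real.exp_nat_mul]; norm_num
  have hcube : (1 + δ) ^ 3 ≤ Real.exp (3 * δ) := by
    rw [hexp3]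
    exact pow_le_pow_left₀ (by linarith) (by linarith [Real.add_one_le_exp δ]) 3
  have hsum_taylor : ‖exp (u + v + u) - expTaylor2 𝕂 (u + v + u)‖ ≤ 27 * δ ^ 3 * Real.exp (3 * δ) :=
    (norm_exp_sub_expTaylor2_le hsum).trans_eq (by ring)
  have hdefect : ‖expTaylor2 𝕂 (u + v + u) - expTaylor2 𝕂 u * expTaylor2 𝕂 v * expTaylor2 𝕂 u‖
      ≤ 7 * δ ^ 3 * Real.exp (3 * δ) := by
    rw [norm_sub_rev]
    exact (norm_expTaylor2_mul_mul_sub_le hu hv).trans (by gcongr)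
  have hproduct : ‖expTaylor2 𝕂 u * expTaylor2 𝕂 v * expTaylor2 𝕂 u - exp u * exp v * exp u‖
      ≤ 3 * δ ^ 3 * Real.exp (3 * δ) := by
    rw [norm_sub_rev]
    refine (norm_mul_mul_sub_mul_mul_le (hexp v hv) (hexp u hu) (norm_expTaylor2_le hu)
      (norm_expTaylor2_le hv) (norm_exp_sub_expTaylor2_le hu) (norm_exp_sub_expTaylor2_le hv)
      (norm_exp_sub_expTaylor2_le hu)).trans_eq ?_
    rw [hexp3]
    ring
  calc ‖exp (u + v + u) - exp u * exp v * exp u‖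
      ≤ ‖exp (u + v + u) - expTaylor2 𝕂 (u + v + u)‖
        + (‖expTaylor2 𝕂 (u + v + u) - expTaylor2 𝕂 u * expTaylor2 𝕂 v * expTaylor2 𝕂 u‖
          + ‖expTaylor2 𝕂 u * expTaylor2 𝕂 v * expTaylor2 𝕂 u - exp u * exp v * exp u‖) :=
        (norm_sub_le_norm_sub_add_norm_sub _ _ _).trans
          (add_le_add le_rfl (norm_sub_le_norm_sub_add_norm_sub _ _ _))
    _ ≤ 37 * δ ^ 3 * Real.exp (3 * δ) := by linarith

end NormedSpace

/-- Third-order local (one-step) error bound for Strang splitting in a unital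
complex Banach algebra: for every `r > 0` there is `C > 0` such that for all
`a, b` with `‖a‖ ≤ r`, `‖b‖ ≤ r` and all `t ∈ [0, 1]`,
`‖exp(t(a+b)) − exp((t/2)b)·exp(ta)·exp((t/2)b)‖ ≤ C·t³`. -/
theorem strang_splitting_local_error (r : ℝ) (hr : 0 < r) :
    ∃ C : ℝ, 0 < C ∧
      ∀ (A : Type) (_ : NormedRing A) (_ : NormedAlgebra ℂ A) (_ : CompleteSpace A)
        (_ : NormOneClass A) (a b : A), ‖a‖ ≤ r → ‖b‖ ≤ r →
        ∀ t : ℝ, t ∈ Set.Icc (0 : ℝ) 1 →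
          ‖NormedSpace.exp (((t : ℂ)) • (a + b)) -
              NormedSpace.exp ((((t : ℝ) / 2 : ℝ) : ℂ) • b) *
                NormedSpace.exp (((t : ℂ)) • a) *
                NormedSpace.exp ((((t : ℝ) / 2 : ℝ) : ℂ) • b)‖ ≤ C * t ^ 3 := by
  refine ⟨37 * r ^ 3 * Real.exp (3 * r), by positivity, ?_⟩
  intro A _ _ _ _ a b ha hb t ⟨ht0, ht1⟩
  have hstrang : (t : ℂ) • (a + b)
      = ((t / 2 : ℝ) : ℂ) • b + (t : ℂ) • a + ((t / 2 : ℝ) : ℂ) • b := by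
    push_cast
    module
  have hu : ‖((t / 2 : ℝ) : ℂ) • b‖ ≤ r * t := by
    rw [norm_smul, Complex.norm_real, Real.norm_of_nonneg (by positivity)]
    nlinarith [norm_nonneg b]
  have hv : ‖(t : ℂ) • a‖ ≤ r * t := by
    rw [norm_smul, Complex.norm_real, Real.norm_of_nonneg ht0]
    nlinarith [norm_nonneg a]
  rw [hstrang]
  refine (NormedSpace.norm_exp_add_add_sub_exp_mul_exp_mul_exp_le ℂ hu hv).trans ?_
  have hrt : r * t ≤ r := mul_le_of_le_one_right hr.le ht1
  calc 37 * (r * t) ^ 3 * Real.exp (3 * (r * t))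
      = 37 * r ^ 3 * Real.exp (3 * (r * t)) * t ^ 3 := by ring
    _ ≤ 37 * r ^ 3 * Real.exp (3 * r) * t ^ 3 := by gcongr
end
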